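/- arXiv:1007.1037 — 2 statements merged into one kernel-verified Lean document; each statement's English description precedes it below -/
import Mathlib

section
/- Let u be a unitary element of M = M_n(L) with entries u_{ij} ∈ L, and let ρ[U] be the n²×n² matrix associated to the operational partition U induced by u. Then N and uNu* are mutually orthogonal if and only if n²·ρ[U] is the n²×n² identity matrix. -/
open Matrix ComplexOrder

/-- The normalized trace `τ_M = Tr/n ⊗ τ_L` on `M = M_n(L)`:
`τ_M(x) = (1/n) Σ_i τ_L(x_{ii})`. -/
noncomputable def tauM (n : ℕ) {L : Type*} [Ring L] [Algebra ℂ L]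
    (τ : L →ₗ[ℂ] ℂ) (x : Matrix (Fin n) (Fin n) L) : ℂ :=
  (n : ℂ)⁻¹ * ∑ i, τ (x i i)

/-- The embedding `a ↦ a ⊗ 1_L` of `M_n(ℂ)` into `M_n(L)`. -/
noncomputable def incl (n : ℕ) {L : Type*} [Ring L] [Algebra ℂ L]
    (a : Matrix (Fin n) (Fin n) ℂ) : Matrix (Fin n) (Fin n) L :=
  a.map (algebraMap ℂ L)

/-- `N = M_n(ℂ) ⊗ 1_L` and `uNu*` are mutually orthogonal:
`τ_M(ab) = τ_M(a)τ_M(b)` for all `a ∈ N`, `b ∈ uNu*`. -/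
def MutuallyOrthogonalConj (n : ℕ) {L : Type*} [Ring L] [StarRing L] [Algebra ℂ L]
    (τ : L →ₗ[ℂ] ℂ) (u : Matrix (Fin n) (Fin n) L) : Prop :=
  ∀ a b : Matrix (Fin n) (Fin n) ℂ,
    tauM n τ (incl n a * (u * incl n b * star u)) =
      tauM n τ (incl n a) * tauM n τ (u * incl n b * star u)

/-- The `n²×n²` density matrix `ρ[U]` associated to the operational partition
`U = (u_{ij}/√n)_{i,j}` induced by `u`:
its `((i,j),(k,l))` entry is `(1/n)·τ_L(u_{kl}* u_{ij})`. -/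
noncomputable def rhoU (n : ℕ) {L : Type*} [Ring L] [StarRing L] [Algebra ℂ L]
    (τ : L →ₗ[ℂ] ℂ) (u : Matrix (Fin n) (Fin n) L) :
    Matrix (Fin n × Fin n) (Fin n × Fin n) ℂ :=
  Matrix.of fun p q : Fin n × Fin n =>
    (n : ℂ)⁻¹ * τ (star (u q.1 q.2) * u p.1 p.2)

/-!
Expanding entrywise, `τ_M((a ⊗ 1)·u(b ⊗ 1)u*) = ∑ a_{ij} b_{kl} ρ[U]_{(j,k),(i,l)}`, while
traciality and `u*u = 1` give `τ_M(a ⊗ 1)·τ_M(u(b ⊗ 1)u*) = n⁻² tr a tr b`, which is the same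
expression with `ρ[U]` replaced by `n⁻²·1`. Testing on matrix units shows that this pairing
determines the matrix, so orthogonality holds iff `ρ[U] = n⁻²·1`.
-/

section Pairing

variable {ι 𝕜 : Type*} [Fintype ι] [DecidableEq ι] [CommSemiring 𝕜]

def conjPairing (R : Matrix (ι × ι) (ι × ι) 𝕜) (a b : Matrix ι ι 𝕜) : 𝕜 :=
  ∑ i, ∑ j, ∑ k, ∑ l, a i j * b k l * R (j, k) (i, l)

theorem conjPairing_single_single (R : Matrix (ι × ι) (ι × ι) 𝕜) (i j k l : ι) :
    conjPairing R (single i j 1) (single k l 1) = R (j, k) (i, l) := by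
  simp [conjPairing, single_apply, ite_and]

theorem conjPairing_injective : Function.Injective (conjPairing (ι := ι) (𝕜 := 𝕜)) := by
  intro R S h
  ext ⟨j, k⟩ ⟨i, l⟩
  simpa only [conjPairing_single_single] using congrFun (congrFun h (single i j 1)) (single k l 1)

theorem conjPairing_smul_one (c : 𝕜) (a b : Matrix ι ι 𝕜) :
    conjPairing (c • 1) a b = c * trace a * trace b := by
  simp only [conjPairing, Matrix.smul_apply, one_apply, Prod.mk.injEq, ite_and, smul_eq_mul,
    mul_ite, mul_one, mul_zero, Finset.sum_ite_irrel, Finset.sum_ite_eq, Finset.sum_ite_eq',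
    Finset.mem_univ, ↓reduceIte, Finset.sum_const_zero, trace, diag_apply, Finset.mul_sum,
    Finset.sum_mul]
  rw [Finset.sum_comm]
  exact Finset.sum_congr rfl fun _ _ => Finset.sum_congr rfl fun _ _ => by ring

end Pairing

section NormalizedTrace

variable {n : ℕ} {L : Type*} [Ring L] [Algebra ℂ L] (τ : L →ₗ[ℂ] ℂ)

theorem tauM_mul_comm (hτtr : ∀ x y : L, τ (x * y) = τ (y * x))
    (x y : Matrix (Fin n) (Fin n) L) :
    tauM n τ (x * y) = tauM n τ (y * x) := by
  simp only [tauM, mul_apply, map_sum]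
  rw [Finset.sum_comm]
  simp only [hτtr]

theorem tauM_incl (hτ1 : τ 1 = 1) (a : Matrix (Fin n) (Fin n) ℂ) :
    tauM n τ (incl n a) = (n : ℂ)⁻¹ * trace a := by
  simp [tauM, incl, trace, Algebra.algebraMap_eq_smul_one, hτ1]

theorem tauM_conj [StarRing L] (hτtr : ∀ x y : L, τ (x * y) = τ (y * x))
    {u : Matrix (Fin n) (Fin n) L} (hu : star u * u = 1) (x : Matrix (Fin n) (Fin n) L) :
    tauM n τ (u * x * star u) = tauM n τ x := by
  rw [tauM_mul_comm τ hτtr (u * x), ← mul_assoc, hu, one_mul]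

theorem incl_mul_conj_incl_apply [StarRing L] (u : Matrix (Fin n) (Fin n) L)
    (a b : Matrix (Fin n) (Fin n) ℂ) (i : Fin n) :
    (incl n a * (u * incl n b * star u) : Matrix (Fin n) (Fin n) L) i i =
      ∑ j, ∑ k, ∑ l, (a i j * b k l) • (u j k * star (u i l)) := by
  simp only [incl, mul_apply, map_apply, star_apply, Finset.mul_sum, Finset.sum_mul,
    Algebra.algebraMap_eq_smul_one, smul_mul_assoc, mul_smul_comm, one_mul, mul_one, smul_smul]
  refine Finset.sum_congr rfl fun j _ => ?_
  rw [Finset.sum_comm]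
  simp only [mul_comm (b _ _)]

theorem tauM_incl_mul_conj_incl [StarRing L] (hτtr : ∀ x y : L, τ (x * y) = τ (y * x))
    (u : Matrix (Fin n) (Fin n) L) (a b : Matrix (Fin n) (Fin n) ℂ) :
    tauM n τ (incl n a * (u * incl n b * star u)) = conjPairing (rhoU n τ u) a b := by
  simp only [tauM, conjPairing, rhoU, of_apply, incl_mul_conj_incl_apply, map_sum, map_smul,
    smul_eq_mul, Finset.mul_sum, hτtr (u _ _)]
  exact Finset.sum_congr rfl fun _ _ => Finset.sum_congr rfl fun _ _ =>
    Finset.sum_congr rfl fun _ _ => Finset.sum_congr rfl fun _ _ => by ring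

theorem tauM_incl_mul_tauM_conj_incl [StarRing L] (hτ1 : τ 1 = 1)
    (hτtr : ∀ x y : L, τ (x * y) = τ (y * x))
    {u : Matrix (Fin n) (Fin n) L} (hu : star u * u = 1) (a b : Matrix (Fin n) (Fin n) ℂ) :
    tauM n τ (incl n a) * tauM n τ (u * incl n b * star u) =
      conjPairing (((n : ℂ) ^ 2)⁻¹ • 1) a b := by
  rw [tauM_conj τ hτtr hu, tauM_incl τ hτ1, tauM_incl τ hτ1, conjPairing_smul_one]
  ring

end NormalizedTrace

theorem mutually_orthogonal_iff_rho_scalar_general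
    {n : ℕ} {L : Type*} [Ring L] [StarRing L] [Algebra ℂ L]
    (τ : L →ₗ[ℂ] ℂ)
    (hτ1 : τ 1 = 1)
    (hτtr : ∀ x y : L, τ (x * y) = τ (y * x))
    (u : Matrix (Fin n) (Fin n) L)
    (hu : star u * u = 1) :
    MutuallyOrthogonalConj n τ u ↔
      ((n : ℂ) ^ 2) • rhoU n τ u = (1 : Matrix (Fin n × Fin n) (Fin n × Fin n) ℂ) := by
  calc MutuallyOrthogonalConj n τ u
      ↔ conjPairing (rhoU n τ u) = conjPairing (((n : ℂ) ^ 2)⁻¹ • 1) := by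
        simp only [MutuallyOrthogonalConj, funext_iff, tauM_incl_mul_conj_incl τ hτtr,
          tauM_incl_mul_tauM_conj_incl τ hτ1 hτtr hu]
    _ ↔ rhoU n τ u = ((n : ℂ) ^ 2)⁻¹ • 1 := conjPairing_injective.eq_iff
    _ ↔ ((n : ℂ) ^ 2) • rhoU n τ u = 1 := by
      rcases Nat.eq_zero_or_pos n with rfl | hn
      · exact iff_of_true (Subsingleton.elim _ _) (Subsingleton.elim _ _)
      · exact eq_inv_smul_iff₀ (by positivity)

/-- For a unitary `u ∈ M = M_n(L)`, the subalgebras `N = M_n(ℂ) ⊗ 1_L`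
and `uNu*` are mutually orthogonal if and only if `n²·ρ[U]` is the `n²×n²` identity
matrix. -/
theorem mutually_orthogonal_iff_rho_scalar
    {n : ℕ} {L : Type*} [Ring L] [StarRing L] [Algebra ℂ L] [StarModule ℂ L]
    [FiniteDimensional ℂ L]
    (τ : L →ₗ[ℂ] ℂ)
    (hτ1 : τ 1 = 1)
    (hτtr : ∀ x y : L, τ (x * y) = τ (y * x))
    (hτstar : ∀ x : L, τ (star x) = starRingEnd ℂ (τ x))
    (hτpos : ∀ x : L, 0 ≤ τ (star x * x))
    (hτfaithful : ∀ x : L, τ (star x * x) = 0 → x = 0)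
    (u : Matrix (Fin n) (Fin n) L)
    (hu : star u * u = 1) (hu' : u * star u = 1) :
    MutuallyOrthogonalConj n τ u ↔
      ((n : ℂ) ^ 2) • rhoU n τ u = (1 : Matrix (Fin n × Fin n) (Fin n × Fin n) ℂ) :=
  mutually_orthogonal_iff_rho_scalar_general τ hτ1 hτtr u hu
end

section
/- Identify M_{nm}(ℂ) with M_n(ℂ) ⊗ M_m(ℂ), let A = M_n(ℂ) ⊗ 1 and let u be a unitary in M_{nm}(ℂ), with B = uAu*. Write u = Σ_{i,j=1}^{n} e_{ij} ⊗ u_{ij} with blocks u_{ij} ∈ M_m(ℂ). Then A and B are mutually orthogonal (with respect to the normalized trace τ = Tr/(nm)) if and only if Tr(u_{ij}* u_{kl}) = δ_{ik} δ_{jl} (m/n) for all i, j, k, l = 1, …, n, where Tr is the unnormalized trace on M_m(ℂ). -/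
/-!
Expanding `τ((a ⊗ 1) u (b ⊗ 1) u*)` in the matrix entries of `a` and `b` shows that it is the
bilinear form in `(a, b)` whose coefficients are the block traces `Tr(u_{ij}* u_{kl})`, while
`τ(a ⊗ 1) τ(u (b ⊗ 1) u*) = τ(a ⊗ 1) τ(b ⊗ 1) = Tr a Tr b / n²` is the bilinear form with
coefficients `δ_{ik} δ_{jl} m/n`. Two bilinear forms on `M_n(ℂ)` agree iff their coefficients do,
as one sees by evaluating them on matrix units.
-/

open Matrix

noncomputable def tauNM (n m : ℕ)
    (x : Matrix (Fin n) (Fin n) (Matrix (Fin m) (Fin m) ℂ)) : ℂ :=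
  ((n * m : ℕ) : ℂ)⁻¹ * ∑ i, (x i i).trace

noncomputable def inclA (n m : ℕ) (a : Matrix (Fin n) (Fin n) ℂ) :
    Matrix (Fin n) (Fin n) (Matrix (Fin m) (Fin m) ℂ) :=
  a.map (algebraMap ℂ (Matrix (Fin m) (Fin m) ℂ))

section BilinearCoefficients

variable {ι R : Type*} [Fintype ι] [DecidableEq ι] [CommSemiring R]

theorem sum_single_mul_single_mul (T : ι → ι → ι → ι → R) (i j k l : ι) :
    ∑ i' : ι, ∑ j' : ι, ∑ k' : ι, ∑ l' : ι,
      single i k (1 : R) i' k' * single l j (1 : R) l' j' * T i' j' k' l' = T i j k l := by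
  simp [single, ite_and, Finset.sum_ite_eq]

theorem forall_sum_mul_mul_eq_iff {T S : ι → ι → ι → ι → R} :
    (∀ a b : Matrix ι ι R,
      ∑ i, ∑ j, ∑ k, ∑ l, a i k * b l j * T i j k l =
        ∑ i, ∑ j, ∑ k, ∑ l, a i k * b l j * S i j k l) ↔ T = S := by
  refine ⟨fun h => ?_, fun h _ _ => h ▸ rfl⟩
  ext i j k l
  simpa only [sum_single_mul_single_mul] using h (single i k 1) (single l j 1)

theorem sum_mul_mul_ite_and_eq (a b : Matrix ι ι R) (c : R) :
    ∑ i, ∑ j, ∑ k, ∑ l, a i k * b l j * (if i = k ∧ j = l then c else 0) =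
      c * (a.trace * b.trace) := by
  simp only [ite_and, mul_ite, mul_zero, Finset.sum_ite_irrel, Finset.sum_const_zero,
    Finset.sum_ite_eq, Finset.mem_univ, if_true]
  simp only [Matrix.trace, diag_apply, Finset.mul_sum, Finset.sum_mul]
  rw [Finset.sum_comm]
  exact Finset.sum_congr rfl fun _ _ => Finset.sum_congr rfl fun _ _ => by ring

end BilinearCoefficients

section NormalizedTrace

variable {n m : ℕ}

theorem tauNM_mul_comm (x y : Matrix (Fin n) (Fin n) (Matrix (Fin m) (Fin m) ℂ)) :
    tauNM n m (x * y) = tauNM n m (y * x) := by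
  unfold tauNM
  congr 1
  simp only [mul_apply, trace_sum]
  rw [Finset.sum_comm]
  exact Finset.sum_congr rfl fun _ _ => Finset.sum_congr rfl fun _ _ => trace_mul_comm _ _

theorem tauNM_conj {u : Matrix (Fin n) (Fin n) (Matrix (Fin m) (Fin m) ℂ)} (hu : star u * u = 1)
    (x : Matrix (Fin n) (Fin n) (Matrix (Fin m) (Fin m) ℂ)) :
    tauNM n m (u * x * star u) = tauNM n m x := by
  rw [tauNM_mul_comm, ← mul_assoc, hu, one_mul]

theorem tauNM_of_mul_eq_zero (h : n * m = 0)
    (x : Matrix (Fin n) (Fin n) (Matrix (Fin m) (Fin m) ℂ)) : tauNM n m x = 0 := by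
  simp [tauNM, h]

theorem tauNM_inclA (a : Matrix (Fin n) (Fin n) ℂ) :
    tauNM n m (inclA n m a) = ((n * m : ℕ) : ℂ)⁻¹ * (m * a.trace) := by
  simp only [tauNM, inclA, map_apply, Algebra.algebraMap_eq_smul_one, trace_smul, trace_one,
    Fintype.card_fin, smul_eq_mul]
  rw [Matrix.trace, ← Finset.sum_mul, mul_comm (m : ℂ)]
  rfl

theorem tauNM_inclA_mul_conj_inclA (u : Matrix (Fin n) (Fin n) (Matrix (Fin m) (Fin m) ℂ))
    (a b : Matrix (Fin n) (Fin n) ℂ) :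
    tauNM n m (inclA n m a * (u * inclA n m b * star u)) =
      ((n * m : ℕ) : ℂ)⁻¹ *
        ∑ i, ∑ j, ∑ k, ∑ l, a i k * b l j * (star (u i j) * u k l).trace := by
  unfold tauNM inclA
  congr 1
  refine Finset.sum_congr rfl fun i _ => ?_
  simp only [mul_apply, map_apply, star_apply, Finset.sum_mul, Finset.mul_sum, trace_sum,
    Algebra.algebraMap_eq_smul_one, smul_mul_assoc, mul_smul_comm, one_mul, mul_one, trace_smul,
    smul_eq_mul]
  rw [Finset.sum_comm]
  refine Finset.sum_congr rfl fun j _ => Finset.sum_congr rfl fun k _ =>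
    Finset.sum_congr rfl fun l _ => ?_
  rw [trace_mul_comm]
  ring

theorem tauNM_orthogonal_iff {u : Matrix (Fin n) (Fin n) (Matrix (Fin m) (Fin m) ℂ)}
    (hu : star u * u = 1) (hnm : n * m ≠ 0) (a b : Matrix (Fin n) (Fin n) ℂ) :
    tauNM n m (inclA n m a * (u * inclA n m b * star u)) =
        tauNM n m (inclA n m a) * tauNM n m (u * inclA n m b * star u) ↔
      ∑ i, ∑ j, ∑ k, ∑ l, a i k * b l j * (star (u i j) * u k l).trace =
        (m : ℂ) / n * (a.trace * b.trace) := by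
  have product : ((n * m : ℕ) : ℂ)⁻¹ * (m * a.trace) * (((n * m : ℕ) : ℂ)⁻¹ * (m * b.trace)) =
      ((n * m : ℕ) : ℂ)⁻¹ * ((m : ℂ) / n * (a.trace * b.trace)) := by
    have hm : (m : ℂ) ≠ 0 := by exact_mod_cast right_ne_zero_of_mul hnm
    push_cast
    field_simp
  rw [tauNM_conj hu, tauNM_inclA_mul_conj_inclA, tauNM_inclA, tauNM_inclA, product]
  exact mul_right_inj' (inv_ne_zero (Nat.cast_ne_zero.mpr hnm))

end NormalizedTrace

theorem mutually_orthogonal_iff_block_traces_general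
    {n m : ℕ}
    (u : Matrix (Fin n) (Fin n) (Matrix (Fin m) (Fin m) ℂ))
    (hu : star u * u = 1) :
    (∀ a b : Matrix (Fin n) (Fin n) ℂ,
        tauNM n m (inclA n m a * (u * inclA n m b * star u)) =
          tauNM n m (inclA n m a) * tauNM n m (u * inclA n m b * star u)) ↔
      ∀ i j k l : Fin n,
        (star (u i j) * u k l).trace =
          if i = k ∧ j = l then (m : ℂ) / n else 0 := by
  rcases eq_or_ne (n * m) 0 with hnm | hnm
  -- `τ` then vanishes identically (`(0 : ℂ)⁻¹ = 0`), and a block exists only when `m = 0`.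
  · refine iff_of_true (fun a b => by simp only [tauNM_of_mul_eq_zero hnm, mul_zero])
      fun i j k l => ?_
    obtain rfl : m = 0 := (mul_eq_zero.mp hnm).resolve_left i.pos.ne'
    simp [Matrix.trace]
  calc _ ↔ _ := forall₂_congr fun a b => by
        rw [tauNM_orthogonal_iff hu hnm, ← sum_mul_mul_ite_and_eq]
    _ ↔ _ := forall_sum_mul_mul_eq_iff
    _ ↔ _ := by simp only [funext_iff]

/-- Identify `M_{nm}(ℂ)` with `M_n(ℂ) ⊗ M_m(ℂ)`, let `A = M_n(ℂ) ⊗ 1`,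
let `u` be a unitary with blocks `u_{ij} ∈ M_m(ℂ)`, and `B = uAu*`. Then `A` and `B`
are mutually orthogonal with respect to `τ = Tr/(nm)` if and only if
`Tr(u_{ij}* u_{kl}) = δ_{ik} δ_{jl} (m/n)` for all `i,j,k,l`. -/
theorem mutually_orthogonal_iff_block_traces
    {n m : ℕ}
    (u : Matrix (Fin n) (Fin n) (Matrix (Fin m) (Fin m) ℂ))
    (hu : star u * u = 1) (hu' : u * star u = 1) :
    (∀ a b : Matrix (Fin n) (Fin n) ℂ,
        tauNM n m (inclA n m a * (u * inclA n m b * star u)) =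
          tauNM n m (inclA n m a) * tauNM n m (u * inclA n m b * star u)) ↔
      ∀ i j k l : Fin n,
        (star (u i j) * u k l).trace =
          if i = k ∧ j = l then (m : ℂ) / n else 0 :=
  mutually_orthogonal_iff_block_traces_general u hu
end
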